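/- arXiv:2509.22056 — 3 statements merged into one kernel-verified Lean document; each statement's English description precedes it below -/
import Mathlib

section
/- Suppose a sequence $a_t$ ($t \geq 0$) of real numbers satisfies the recursion $a_{t+1} = a_t + c/(1 + b e^{a_t})$ for some constants $0 \leq c \leq 1$ and $b \geq 0$. Let $x_t$ be the unique real solution of $x_t + b e^{x_t} = ct + a_0 + b e^{a_0}$. Then for all $t \geq 0$, $x_t \leq a_t \leq x_t + c/(1 + b e^{a_0})$. -/
/-!
Put `F y = y + b e^y`, so that `x_t = F⁻¹ (c t + F a₀)`. Since `F` is convex with `F' y = 1 + b e^y`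
and the step is `Δ_t = c / F' a_t`, the tangent line at `a_t` gives `F a_{t+1} ≥ F a_t + c`, while the
tangent line at `a_{t+1} - δ`, `δ = c / F' a₀ ≥ Δ_t`, gives `F (a_{t+1} - δ) ≤ F (a_t - δ) + c`.
Summing and inverting the increasing map `F` yields `x_t ≤ a_t ≤ x_t + δ`.
-/

open Real

noncomputable def addMulExp (b y : ℝ) : ℝ := y + b * exp y

section addMulExp

variable {b : ℝ}

theorem strictMono_addMulExp (hb : 0 ≤ b) : StrictMono (addMulExp b) :=
  strictMono_id.add_monotone fun _ _ h => mul_le_mul_of_nonneg_left (exp_le_exp.mpr h) hb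

theorem one_add_mul_exp_pos (hb : 0 ≤ b) (y : ℝ) : 0 < 1 + b * exp y := by
  have := mul_nonneg hb (exp_pos y).le
  linarith

theorem addMulExp_add_ge (hb : 0 ≤ b) (y Δ : ℝ) :
    addMulExp b y + Δ * (1 + b * exp y) ≤ addMulExp b (y + Δ) := by
  have hexp : b * exp y * (1 + Δ) ≤ b * exp y * exp Δ :=
    mul_le_mul_of_nonneg_left (by linarith [add_one_le_exp Δ]) (mul_nonneg hb (exp_pos y).le)
  simp only [addMulExp, exp_add]
  linarith

theorem addMulExp_add_le (hb : 0 ≤ b) (y Δ : ℝ) :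
    addMulExp b (y + Δ) ≤ addMulExp b y + Δ * (1 + b * exp (y + Δ)) := by
  have hΔ : exp Δ - 1 ≤ Δ * exp Δ := by
    have h := mul_le_mul_of_nonneg_right (one_sub_le_exp_neg Δ) (exp_pos Δ).le
    rw [← exp_add, neg_add_cancel, exp_zero] at h
    linarith
  have hexp := mul_le_mul_of_nonneg_left hΔ (mul_nonneg hb (exp_pos y).le)
  simp only [addMulExp, exp_add]
  linarith

end addMulExp

section recursion

variable {b c : ℝ} {a : ℕ → ℝ}

theorem monotone_of_recursion (hc0 : 0 ≤ c) (hb : 0 ≤ b)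
    (ha : ∀ t : ℕ, a (t + 1) = a t + c / (1 + b * exp (a t))) : Monotone a :=
  monotone_nat_of_le_succ fun t => by
    rw [ha t]
    linarith [div_nonneg hc0 (one_add_mul_exp_pos hb (a t)).le]

theorem add_addMulExp_le_of_recursion (hb : 0 ≤ b)
    (ha : ∀ t : ℕ, a (t + 1) = a t + c / (1 + b * exp (a t))) (t : ℕ) :
    c * t + addMulExp b (a 0) ≤ addMulExp b (a t) := by
  induction t with
  | zero => simp
  | succ n ih =>
    have hstep := addMulExp_add_ge hb (a n) (c / (1 + b * exp (a n)))
    rw [div_mul_cancel₀ c (one_add_mul_exp_pos hb (a n)).ne', ← ha n] at hstep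
    push_cast
    linarith

theorem addMulExp_sub_le_of_recursion (hc0 : 0 ≤ c) (hb : 0 ≤ b)
    (ha : ∀ t : ℕ, a (t + 1) = a t + c / (1 + b * exp (a t))) (t : ℕ) :
    addMulExp b (a t - c / (1 + b * exp (a 0))) ≤ c * t + addMulExp b (a 0) := by
  set δ := c / (1 + b * exp (a 0))
  induction t with
  | zero =>
    simpa using (strictMono_addMulExp hb).monotone
      (by linarith [div_nonneg hc0 (one_add_mul_exp_pos hb (a 0)).le] : a 0 - δ ≤ a 0)
  | succ n ih =>
    set Δ := c / (1 + b * exp (a n))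
    have hΔδ : Δ ≤ δ :=
      div_le_div_of_nonneg_left hc0 (one_add_mul_exp_pos hb (a 0)) <| by
        gcongr
        exact monotone_of_recursion hc0 hb ha (Nat.zero_le n)
    -- the tangent slope at `a_{n+1} - δ ≤ a_n` is at most `F' a_n = c / Δ`
    have hslope : Δ * (1 + b * exp (a n - δ + Δ)) ≤ c := by
      calc Δ * (1 + b * exp (a n - δ + Δ)) ≤ Δ * (1 + b * exp (a n)) := by
            gcongr
            linarith
        _ = c := div_mul_cancel₀ c (one_add_mul_exp_pos hb (a n)).ne'
    have hstep := addMulExp_add_le hb (a n - δ) Δ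
    rw [show a (n + 1) - δ = a n - δ + Δ by rw [ha n]; ring]
    push_cast
    linarith

end recursion

theorem stmt_0_general (b c : ℝ) (hc0 : 0 ≤ c) (hb : 0 ≤ b)
    (a x : ℕ → ℝ)
    (ha : ∀ t : ℕ, a (t + 1) = a t + c / (1 + b * Real.exp (a t)))
    (hx : ∀ t : ℕ, x t + b * Real.exp (x t) = c * t + a 0 + b * Real.exp (a 0)) :
    ∀ t : ℕ, x t ≤ a t ∧ a t ≤ x t + c / (1 + b * Real.exp (a 0)) := by
  intro t
  have hF := strictMono_addMulExp hb
  have hxt : addMulExp b (x t) = c * t + addMulExp b (a 0) := by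
    simp only [addMulExp, hx t]
    ring
  constructor
  · exact hF.le_iff_le.mp (hxt ▸ add_addMulExp_le_of_recursion hb ha t)
  · have := hF.le_iff_le.mp (hxt ▸ addMulExp_sub_le_of_recursion hc0 hb ha t)
    linarith

theorem stmt_0 (b c : ℝ) (hc0 : 0 ≤ c) (hc1 : c ≤ 1) (hb : 0 ≤ b)
    (a x : ℕ → ℝ)
    (ha : ∀ t : ℕ, a (t + 1) = a t + c / (1 + b * Real.exp (a t)))
    (hx : ∀ t : ℕ, x t + b * Real.exp (x t) = c * t + a 0 + b * Real.exp (a 0)) :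
    ∀ t : ℕ, x t ≤ a t ∧ a t ≤ x t + c / (1 + b * Real.exp (a 0)) :=
  stmt_0_general b c hc0 hb a x ha hx
end

section
/- Let $x_t$ be the unique solution of $x_t + b e^{x_t} = ct + b$ where $b = e^{-\kappa/2}$ with $0 \leq \kappa \leq 0.1$ and $c = \frac{3\eta\sigma_p^2 d}{2nm} > 0$. Then for all $t \geq 0$, $\log\left(\frac{\eta\sigma_p^2 d}{8nm} t + \frac{2}{3}\right) \leq x_t \leq \log\left(\frac{2\eta\sigma_p^2 d}{nm} t + 1\right)$. -/
open Real

/-!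
The map `u ↦ u + b e^u` is strictly increasing for `b ≥ 0`, so `x_t` lies above (below) any point
where this map is at most (at least) `ct + b`. With `s = ct`, the point `log (s/12 + 2/3)` works from
below because `log L ≤ L - 1` and `b ≤ 1`, and `log (4s/3 + 1)` works from above because its
logarithm is nonnegative and `b ≥ 3/4`.
-/

lemma strictMono_add_mul_exp {b : ℝ} (hb : 0 ≤ b) : StrictMono fun u => u + b * exp u :=
  strictMono_id.add_monotone fun _ _ h => mul_le_mul_of_nonneg_left (exp_le_exp.mpr h) hb

lemma log_le_of_add_mul_exp_eq {b s y : ℝ} (hb0 : 0 ≤ b) (hb1 : b ≤ 1) (hs : 0 ≤ s)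
    (hy : y + b * exp y = s + b) : log (s / 12 + 2 / 3) ≤ y := by
  have hL : 0 < s / 12 + 2 / 3 := by positivity
  refine (strictMono_add_mul_exp hb0).le_iff_le.mp ?_
  have hlog := log_le_sub_one_of_pos hL
  simp only [exp_log hL, hy]
  nlinarith

lemma le_log_of_add_mul_exp_eq {b s y : ℝ} (hb : 3 / 4 ≤ b) (hs : 0 ≤ s)
    (hy : y + b * exp y = s + b) : y ≤ log (4 / 3 * s + 1) := by
  have hU : 0 < 4 / 3 * s + 1 := by positivity
  refine (strictMono_add_mul_exp (b := b) (by linarith)).le_iff_le.mp ?_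
  have hlog : 0 ≤ log (4 / 3 * s + 1) := log_nonneg (by linarith)
  simp only [exp_log hU, hy]
  nlinarith

lemma three_quarters_le_exp_neg_half {κ : ℝ} (hκ : κ ≤ 0.1) : 3 / 4 ≤ exp (-κ / 2) := by
  linarith [add_one_le_exp (-κ / 2)]

theorem stmt_2_general (κ η σp d n m : ℝ)
    (hκ0 : 0 ≤ κ) (hκ1 : κ ≤ 0.1)
    (hη : 0 < η) (hd : 0 < d) (hn : 0 < n) (hm : 0 < m)
    (b c : ℝ) (hb : b = Real.exp (-κ / 2)) (hc : c = 3 * η * σp ^ 2 * d / (2 * n * m))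
    (x : ℝ → ℝ)
    (hx : ∀ t : ℝ, 0 ≤ t → x t + b * Real.exp (x t) = c * t + b) :
    ∀ t : ℝ, 0 ≤ t →
      Real.log (η * σp ^ 2 * d / (8 * n * m) * t + 2 / 3) ≤ x t ∧
        x t ≤ Real.log (2 * η * σp ^ 2 * d / (n * m) * t + 1) := by
  intro t ht
  have hb1 : b ≤ 1 := hb ▸ exp_le_one_iff.mpr (by linarith)
  have hb34 : 3 / 4 ≤ b := hb ▸ three_quarters_le_exp_neg_half hκ1
  have hs : 0 ≤ c * t := by rw [hc]; positivity
  have hlower : η * σp ^ 2 * d / (8 * n * m) * t = c * t / 12 := by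
    rw [hc]; field_simp; ring
  have hupper : 2 * η * σp ^ 2 * d / (n * m) * t = 4 / 3 * (c * t) := by
    rw [hc]; field_simp; ring
  rw [hlower, hupper]
  exact ⟨log_le_of_add_mul_exp_eq (by linarith) hb1 hs (hx t ht),
    le_log_of_add_mul_exp_eq hb34 hs (hx t ht)⟩

theorem stmt_2 (κ η σp d n m : ℝ)
    (hκ0 : 0 ≤ κ) (hκ1 : κ ≤ 0.1)
    (hη : 0 < η) (hσ : 0 < σp) (hd : 0 < d) (hn : 0 < n) (hm : 0 < m)
    (b c : ℝ) (hb : b = Real.exp (-κ / 2)) (hc : c = 3 * η * σp ^ 2 * d / (2 * n * m))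
    (x : ℝ → ℝ)
    (hx : ∀ t : ℝ, 0 ≤ t → x t + b * Real.exp (x t) = c * t + b) :
    ∀ t : ℝ, 0 ≤ t →
      Real.log (η * σp ^ 2 * d / (8 * n * m) * t + 2 / 3) ≤ x t ∧
        x t ≤ Real.log (2 * η * σp ^ 2 * d / (n * m) * t + 1) :=
  stmt_2_general κ η σp d n m hκ0 hκ1 hη hd hn hm b c hb hc x hx
end

section
/- Let $g : \mathbb{R}^d \to \mathbb{R}$ and suppose there exist $\xi' \in \mathbb{R}^d$ and $M > 0$ such that $g(\xi + \xi') - g(\xi) + g(-\xi + \xi') - g(-\xi) \geq 4M$ for all $\xi$ in a set of full measure. Then for $\xi \sim \mathcal{N}(0, \sigma^2 I_d)$ with $\|\xi'\|_2 \leq 0.02\sigma$, letting $\Omega = \{\xi : |g(\xi)| \geq M\}$, we have $\mathbb{P}(\xi \in \Omega) \geq 0.24$. -/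
open MeasureTheory ProbabilityTheory Real Finset
open scoped NNReal ENNReal

/-!
The shifted Gaussian `N(ξ', σ²I)` has density `F x = exp (⟪ξ', x⟫ / σ² - ‖ξ'‖² / (2σ²))` with
respect to `N(0, σ²I)`, and `∫ F² = exp (‖ξ'‖² / σ²)`. Since `F - 1` has mean zero, the excess
mass `∫_A (F - 1)` is at most half of `∫ |F - 1| ≤ √(Var F)`, so the two laws differ by at most
`√(exp (‖ξ'‖² / σ²) - 1) / 2 ≤ 0.02` on any set.

The hypothesis puts one of `ξ, ξ + ξ', -ξ, -ξ + ξ'` in `Ω = {M ≤ |g|}` almost surely. The law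
of `-ξ` is that of `ξ`, and the law of `ξ + ξ'` is `0.02`-close to it, so
`1 ≤ 4 P(Ω) + 2 · 0.02`.
-/

section MeanDeviation

variable {Ω : Type*} [MeasurableSpace Ω] {μ : Measure Ω} [IsProbabilityMeasure μ]

lemma integral_abs_sub_integral_le_sqrt_variance {X : Ω → ℝ} (hX : MemLp X 2 μ) :
    ∫ ω, |X ω - μ[X]| ∂μ ≤ √(Var[X; μ]) := by
  have hY : MemLp (fun ω => |X ω - μ[X]|) 2 μ := (hX.sub (memLp_const _)).abs
  have hsq : μ[(fun ω => |X ω - μ[X]|) ^ 2] = Var[X; μ] := by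
    simp only [Pi.pow_apply, sq_abs]
    exact (variance_eq_integral hX.aemeasurable).symm
  have := variance_nonneg (fun ω => |X ω - μ[X]|) μ
  rw [variance_eq_sub hY, hsq] at this
  exact Real.le_sqrt_of_sq_le (by linarith)

lemma measureReal_withDensity_le_add_sqrt {f : Ω → ℝ} (hf0 : 0 ≤ f) (hf1 : ∫ ω, f ω ∂μ = 1)
    (hf2 : Integrable (fun ω => f ω ^ 2) μ) {s : Set Ω} (hs : MeasurableSet s) :
    (μ.withDensity fun ω => ENNReal.ofReal (f ω)).real s
      ≤ μ.real s + √(∫ ω, f ω ^ 2 ∂μ - 1) / 2 := by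
  have hfi : Integrable f μ := Integrable.of_integral_ne_zero (by rw [hf1]; exact one_ne_zero)
  have hf : MemLp f 2 μ := (memLp_two_iff_integrable_sq hfi.1).2 hf2
  have hvar : Var[f; μ] = ∫ ω, f ω ^ 2 ∂μ - 1 := by
    rw [variance_eq_sub hf, hf1, one_pow]; rfl
  have hdev := integral_abs_sub_integral_le_sqrt_variance hf
  rw [hf1, hvar] at hdev
  have hset : 2 * ∫ ω in s, (f ω - 1) ∂μ ≤ ∫ ω, |f ω - 1| ∂μ := by
    have hg : Integrable (fun ω => f ω - 1) μ := hfi.sub (integrable_const _)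
    calc 2 * ∫ ω in s, (f ω - 1) ∂μ = ∫ ω, 2 * s.indicator (fun ω => f ω - 1) ω ∂μ := by
          rw [integral_const_mul, integral_indicator hs]
      _ ≤ ∫ ω, ((f ω - 1) + |f ω - 1|) ∂μ := by
          refine integral_mono ((hg.indicator hs).const_mul 2) (hg.add hg.abs) fun ω => ?_
          by_cases hω : ω ∈ s
          · simp only [Set.indicator_of_mem hω]
            linarith [le_abs_self (f ω - 1)]
          · simp only [Set.indicator_of_notMem hω]
            linarith [neg_abs_le (f ω - 1)]
      _ = ∫ ω, |f ω - 1| ∂μ := by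
          rw [integral_add hg hg.abs, integral_sub hfi (integrable_const _), hf1]
          simp
  have hint_s : ∫ ω in s, (f ω - 1) ∂μ = ∫ ω in s, f ω ∂μ - μ.real s := by
    rw [integral_sub hfi.integrableOn (integrable_const _), setIntegral_const, smul_eq_mul, mul_one]
  rw [measureReal_def, withDensity_apply _ hs,
    ← ofReal_integral_eq_lintegral_ofReal hfi.integrableOn (ae_of_all _ hf0),
    ENNReal.toReal_ofReal (setIntegral_nonneg hs fun ω _ => hf0 ω)]
  linarith

end MeanDeviation

section Pi

variable {ι : Type*} [Fintype ι] {α : ι → Type*} [∀ i, MeasurableSpace (α i)]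
  {μ : ∀ i, Measure (α i)}

lemma lintegral_fintype_prod_eq_prod [∀ i, IsProbabilityMeasure (μ i)] {f : ∀ i, α i → ℝ≥0∞}
    (hf : ∀ i, Measurable (f i)) :
    ∫⁻ x, ∏ i, f i (x i) ∂Measure.pi μ = ∏ i, ∫⁻ y, f i y ∂μ i := by
  rw [lintegral_prod_eq_prod_lintegral_of_indepFun _ _
    (iIndepFun_pi fun i => (hf i).aemeasurable) fun i => (hf i).comp (measurable_pi_apply i)]
  exact Finset.prod_congr rfl fun i _ => (measurePreserving_eval μ i).lintegral_comp (hf i)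

lemma Measure.pi_withDensity [∀ i, IsProbabilityMeasure (μ i)] {f : ∀ i, α i → ℝ≥0∞}
    (hf : ∀ i, Measurable (f i)) [∀ i, SigmaFinite ((μ i).withDensity (f i))] :
    Measure.pi (fun i => (μ i).withDensity (f i))
      = (Measure.pi μ).withDensity fun x => ∏ i, f i (x i) := by
  refine Measure.pi_eq fun s hs => ?_
  have hind : (Set.univ.pi s).indicator (fun x => ∏ i, f i (x i))
      = fun x => ∏ i, (s i).indicator (f i) (x i) := by
    ext x
    by_cases hx : x ∈ Set.univ.pi s
    · rw [Set.indicator_of_mem hx]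
      exact Finset.prod_congr rfl fun i _ => (Set.indicator_of_mem (hx i trivial) _).symm
    · rw [Set.indicator_of_notMem hx]
      obtain ⟨i, -, hi⟩ := by simpa only [Set.mem_pi, not_forall] using hx
      exact (Finset.prod_eq_zero (Finset.mem_univ i) (Set.indicator_of_notMem hi _)).symm
  rw [withDensity_apply _ (.univ_pi hs), ← lintegral_indicator (.univ_pi hs), hind,
    lintegral_fintype_prod_eq_prod fun i => (hf i).indicator (hs i)]
  exact Finset.prod_congr rfl fun i _ => by
    rw [lintegral_indicator (hs i), withDensity_apply _ (hs i)]

end Pi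

section Gaussian

variable {v : ℝ≥0}

lemma gaussianReal_eq_withDensity_exp (hv : v ≠ 0) (m : ℝ) :
    gaussianReal m v = (gaussianReal 0 v).withDensity
      fun y => ENNReal.ofReal (exp (m / v * y - m ^ 2 / (2 * v))) := by
  rw [gaussianReal_of_var_ne_zero _ hv, gaussianReal_of_var_ne_zero _ hv,
    ← withDensity_mul _ (measurable_gaussianPDF _ _) (by fun_prop)]
  congr 1 with y
  rw [Pi.mul_apply, gaussianPDF, gaussianPDF, ← ENNReal.ofReal_mul (gaussianPDFReal_nonneg _ _ _)]
  congr 1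
  simp only [gaussianPDFReal]
  rw [mul_assoc _ (rexp _), ← Real.exp_add]
  have hv' : (v : ℝ) ≠ 0 := by exact_mod_cast hv
  congr 2
  field_simp
  ring

lemma integrable_exp_mul_sub_gaussianReal (μ a b : ℝ) :
    Integrable (fun y => exp (a * y - b)) (gaussianReal μ v) := by
  simp_rw [Real.exp_sub]
  exact (integrable_exp_mul_gaussianReal a).div_const _

lemma integral_exp_mul_sub_gaussianReal (μ a b : ℝ) :
    ∫ y, exp (a * y - b) ∂gaussianReal μ v = exp (μ * a + v * a ^ 2 / 2 - b) := by
  simp_rw [Real.exp_sub _ b, integral_div]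
  rw [← mgf, mgf_fun_id_gaussianReal]

lemma measureReal_pi_gaussianReal_le_add {ι : Type*} [Fintype ι] (hv : v ≠ 0) (m : ι → ℝ)
    {A : Set (ι → ℝ)} (hA : MeasurableSet A) :
    (Measure.pi fun i => gaussianReal (m i) v).real A
      ≤ (Measure.pi fun _ : ι => gaussianReal 0 v).real A
        + √(exp (∑ i, m i ^ 2 / v) - 1) / 2 := by
  set f : ι → ℝ → ℝ := fun i y => exp (m i / v * y - m i ^ 2 / (2 * v))
  have hdens : Measure.pi (fun i => gaussianReal (m i) v)
      = (Measure.pi fun _ => gaussianReal 0 v).withDensity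
          fun x => ENNReal.ofReal (∏ i, f i (x i)) := by
    rw [funext fun i => gaussianReal_eq_withDensity_exp hv (m i),
      Measure.pi_withDensity fun i => by fun_prop]
    congr with x
    exact (ENNReal.ofReal_prod_of_nonneg fun i _ => (exp_pos _).le).symm
  have hv' : (v : ℝ) ≠ 0 := by exact_mod_cast hv
  have hf_sq (i : ι) (y : ℝ) : f i y ^ 2 = exp (2 * m i / v * y - m i ^ 2 / v) := by
    rw [← Real.exp_nat_mul]; congr 1; field_simp; ring
  have h1 : ∫ x, ∏ i, f i (x i) ∂Measure.pi (fun _ => gaussianReal 0 v) = 1 := by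
    rw [integral_fintype_prod_eq_prod]
    refine Finset.prod_eq_one fun i _ => ?_
    rw [integral_exp_mul_sub_gaussianReal, ← Real.exp_zero]
    congr 1; field_simp; ring
  have h2 : ∫ x, (∏ i, f i (x i)) ^ 2 ∂Measure.pi (fun _ => gaussianReal 0 v)
      = exp (∑ i, m i ^ 2 / v) := by
    simp_rw [← Finset.prod_pow, hf_sq]
    rw [integral_fintype_prod_eq_prod (f := fun i y => exp (2 * m i / v * y - m i ^ 2 / v)),
      Real.exp_sum]
    refine Finset.prod_congr rfl fun i _ => ?_
    rw [integral_exp_mul_sub_gaussianReal]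
    congr 1; field_simp; ring
  have h2i : Integrable (fun x => (∏ i, f i (x i)) ^ 2) (Measure.pi fun _ => gaussianReal 0 v) := by
    simp_rw [← Finset.prod_pow, hf_sq]
    exact Integrable.fintype_prod fun i => integrable_exp_mul_sub_gaussianReal _ _ _
  rw [hdens, ← h2]
  exact measureReal_withDensity_le_add_sqrt
    (fun x => Finset.prod_nonneg fun i _ => (exp_pos _).le) h1 h2i hA

lemma measurePreserving_add_pi_gaussianReal {ι : Type*} [Fintype ι] (v : ℝ≥0) (m : ι → ℝ) :
    MeasurePreserving (· + m) (Measure.pi fun _ : ι => gaussianReal 0 v)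
      (Measure.pi fun i => gaussianReal (m i) v) :=
  measurePreserving_pi _ _ (f := fun i y => y + m i) fun i =>
    ⟨measurable_add_const _, by rw [gaussianReal_map_add_const, zero_add]⟩

lemma measurePreserving_neg_pi_gaussianReal {ι : Type*} [Fintype ι] (v : ℝ≥0) :
    MeasurePreserving Neg.neg (Measure.pi fun _ : ι => gaussianReal 0 v)
      (Measure.pi fun _ : ι => gaussianReal 0 v) :=
  measurePreserving_pi _ _ (f := fun _ y => -y) fun _ =>
    ⟨measurable_neg, by rw [gaussianReal_map_neg, neg_zero]⟩

end Gaussian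

lemma one_le_four_mul_measureReal_add_two_mul {E : Type*} [MeasurableSpace E] [Add E]
    [InvolutiveNeg E] [MeasurableNeg E] {μ : Measure E} [IsProbabilityMeasure μ]
    (hμ : MeasurePreserving Neg.neg μ μ) {A : Set E} {ξ' : E} {δ : ℝ}
    (hshift : μ.real ((· + ξ') ⁻¹' A) ≤ μ.real A + δ)
    (hcover : ∀ᵐ ξ ∂μ, ξ ∈ A ∨ ξ + ξ' ∈ A ∨ -ξ ∈ A ∨ -ξ + ξ' ∈ A) :
    1 ≤ 4 * μ.real A + 2 * δ := by
  have hneg (s : Set E) : μ.real (Neg.neg ⁻¹' s) = μ.real s := by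
    rw [measureReal_def, measureReal_def,
      hμ.measure_preimage_emb (MeasurableEquiv.neg E).measurableEmbedding]
  set A' := (· + ξ') ⁻¹' A
  set U := A ∪ A' ∪ Neg.neg ⁻¹' A ∪ Neg.neg ⁻¹' A'
  have hU : μ Set.univ ≤ μ U := measure_mono_ae <| hcover.mono fun ξ hξ _ => show ξ ∈ U by
    simpa only [U, A', Set.mem_union, Set.mem_preimage, or_assoc] using hξ
  calc 1 = μ.real U := by
        rw [measureReal_def, le_antisymm prob_le_one (measure_univ (μ := μ) ▸ hU),
          ENNReal.toReal_one]
    _ ≤ μ.real A + μ.real A' + μ.real (Neg.neg ⁻¹' A) + μ.real (Neg.neg ⁻¹' A') := by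
      grw [measureReal_union_le, measureReal_union_le, measureReal_union_le]
    _ ≤ 4 * μ.real A + 2 * δ := by rw [hneg, hneg]; linarith

theorem stmt_8_general (d : ℕ) (σ : ℝ≥0) (hσ : 0 < σ)
    (g : (Fin d → ℝ) → ℝ) (hg : Measurable g)
    (ξ' : Fin d → ℝ) (M : ℝ)
    (hnorm : Real.sqrt (∑ i : Fin d, ξ' i ^ 2) ≤ 0.02 * (σ : ℝ))
    (hlb : ∀ᵐ ξ ∂(Measure.pi fun _ : Fin d => gaussianReal 0 (σ ^ 2)),
      g (ξ + ξ') - g ξ + (g (-ξ + ξ') - g (-ξ)) ≥ 4 * M) :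
    (Measure.pi fun _ : Fin d => gaussianReal 0 (σ ^ 2)) {ξ | M ≤ |g ξ|}
      ≥ ENNReal.ofReal 0.24 := by
  set μ := Measure.pi fun _ : Fin d => gaussianReal 0 (σ ^ 2)
  set A := {ξ | M ≤ |g ξ|}
  have hA : MeasurableSet A := measurableSet_le measurable_const hg.abs
  have hratio : ∑ i, ξ' i ^ 2 / ((σ ^ 2 : ℝ≥0) : ℝ) ≤ 0.0004 := by
    have hσ' : (0 : ℝ) < σ := hσ
    have hsum : 0 ≤ ∑ i, ξ' i ^ 2 := by positivity
    rw [← Finset.sum_div, div_le_iff₀ (by positivity), NNReal.coe_pow]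
    nlinarith [Real.sq_sqrt hsum, Real.sqrt_nonneg (∑ i, ξ' i ^ 2)]
  have hδ : √(exp (∑ i, ξ' i ^ 2 / ((σ ^ 2 : ℝ≥0) : ℝ)) - 1) / 2 ≤ 0.02 := by
    have hx : 0 ≤ ∑ i, ξ' i ^ 2 / ((σ ^ 2 : ℝ≥0) : ℝ) := by positivity
    generalize ∑ i, ξ' i ^ 2 / ((σ ^ 2 : ℝ≥0) : ℝ) = x at hx hratio ⊢
    have := abs_exp_sub_one_le (x := x) (by rw [abs_of_nonneg hx]; linarith)
    rw [div_le_iff₀ two_pos, Real.sqrt_le_left (by norm_num)]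
    linarith [le_abs_self (exp x - 1), abs_of_nonneg hx]
  have hshift : μ.real ((· + ξ') ⁻¹' A) ≤ μ.real A + 0.02 := by
    rw [measureReal_def, (measurePreserving_add_pi_gaussianReal _ ξ').measure_preimage
      hA.nullMeasurableSet, ← measureReal_def]
    exact (measureReal_pi_gaussianReal_le_add (pow_ne_zero 2 hσ.ne') ξ' hA).trans (by linarith)
  have hcover : ∀ᵐ ξ ∂μ, ξ ∈ A ∨ ξ + ξ' ∈ A ∨ -ξ ∈ A ∨ -ξ + ξ' ∈ A := by
    filter_upwards [hlb] with ξ hξ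
    by_contra! h
    simp only [A, Set.mem_ofPred_eq, not_le, abs_lt] at h
    linarith
  have hpigeon := one_le_four_mul_measureReal_add_two_mul
    (measurePreserving_neg_pi_gaussianReal _) hshift hcover
  rw [ge_iff_le, ENNReal.ofReal_le_iff_le_toReal (measure_ne_top _ _), ← measureReal_def]
  linarith

theorem stmt_8 (d : ℕ) (σ : ℝ≥0) (hσ : 0 < σ)
    (g : (Fin d → ℝ) → ℝ) (hg : Measurable g)
    (ξ' : Fin d → ℝ) (M : ℝ) (hM : 0 < M)
    (hnorm : Real.sqrt (∑ i : Fin d, ξ' i ^ 2) ≤ 0.02 * (σ : ℝ))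
    (hlb : ∀ᵐ ξ ∂(Measure.pi fun _ : Fin d => gaussianReal 0 (σ ^ 2)),
      g (ξ + ξ') - g ξ + (g (-ξ + ξ') - g (-ξ)) ≥ 4 * M) :
    (Measure.pi fun _ : Fin d => gaussianReal 0 (σ ^ 2)) {ξ | M ≤ |g ξ|}
      ≥ ENNReal.ofReal 0.24 :=
  stmt_8_general d σ hσ g hg ξ' M hnorm hlb
end
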